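/- arXiv:1710.07473 — 2 statements merged into one kernel-verified Lean document; each statement's English description precedes it below -/
import Mathlib

section
/- Let J ∈ ℝ^{n×p} with JᵀJ invertible. Then the block matrix [[I_n + J(JᵀJ)⁻¹Jᵀ, −J], [−Jᵀ, JᵀJ]] ∈ ℝ^{(n+p)×(n+p)} is symmetric positive definite. -/
/-! The Schur complement of the positive definite block `JᵀJ` is
`I + J(JᵀJ)⁻¹Jᵀ - J(JᵀJ)⁻¹Jᵀ = I`. A Hermitian block matrix whose lower-right block and its
Schur complement are both positive definite is itself positive definite: the block `LDLᴴ`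
factorization makes it congruent to the block diagonal matrix of the two. -/

open scoped Matrix

namespace Matrix

variable {m n R : Type*} [Fintype m] [Fintype n]

theorem PosDef.fromBlocks_zero [Ring R] [PartialOrder R] [StarRing R] [StarOrderedRing R]
    {A : Matrix m m R} {D : Matrix n n R} (hA : A.PosDef) (hD : D.PosDef) :
    (fromBlocks A 0 0 D).PosDef := by
  refine of_dotProduct_mulVec_pos (hA.1.fromBlocks (by simp) hD.1) fun x hx => ?_
  rw [← Sum.elim_comp_inl_inr x] at hx ⊢
  simp only [fromBlocks_mulVec, zero_mulVec, add_zero, zero_add, Function.star_sumElim,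
    sumElim_dotProduct_sumElim]
  have hu := hA.posSemidef.dotProduct_mulVec_nonneg (x ∘ Sum.inl)
  have hv := hD.posSemidef.dotProduct_mulVec_nonneg (x ∘ Sum.inr)
  by_cases h : x ∘ Sum.inl = 0
  · refine add_pos_of_nonneg_of_pos hu (hD.dotProduct_mulVec_pos fun h' => hx ?_)
    rw [h, h', Sum.elim_zero_zero]
  · exact add_pos_of_pos_of_nonneg (hA.dotProduct_mulVec_pos h) hv

theorem PosDef.fromBlocks₂₂_of_schurComplement [CommRing R] [PartialOrder R] [StarRing R]
    [StarOrderedRing R] [DecidableEq m] [DecidableEq n] {A : Matrix m m R} (B : Matrix m n R)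
    {D : Matrix n n R} (hD : D.PosDef) [Invertible D] (hS : (A - B * D⁻¹ * Bᴴ).PosDef) :
    (fromBlocks A B Bᴴ D).PosDef := by
  have hU : IsUnit (fromBlocks 1 (B * ⅟D) 0 1 : Matrix (m ⊕ n) (m ⊕ n) R) := by
    simp [isUnit_iff_isUnit_det]
  have hL : star (fromBlocks 1 (B * ⅟D) 0 1) = fromBlocks 1 0 (⅟D * Bᴴ) 1 := by
    simp [star_eq_conjTranspose, fromBlocks_conjTranspose, hD.1.inv.eq]
  rw [fromBlocks_eq_of_invertible₂₂, ← hL, IsUnit.posDef_star_right_conjugate_iff hU,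
    invOf_eq_nonsing_inv]
  exact hS.fromBlocks_zero hD

theorem mulVec_injective_of_isUnit_mul {l : Type*} [Fintype l] [DecidableEq l]
    [CommRing R] {A : Matrix l m R} {B : Matrix m l R} (h : IsUnit (A * B)) :
    Function.Injective B.mulVec :=
  .of_comp (f := A.mulVec) <| by
    simpa only [Function.comp_def, mulVec_mulVec] using mulVec_injective_of_isUnit h

end Matrix

/-- For `J` with `JᵀJ` invertible, the block matrix
`[[I + J(JᵀJ)⁻¹Jᵀ, -J], [-Jᵀ, JᵀJ]]` is symmetric positive definite. -/
theorem block_H_plus_T_posdef {n p : ℕ} (J : Matrix (Fin n) (Fin p) ℝ)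
    (hJ : IsUnit (Jᵀ * J)) :
    (Matrix.fromBlocks (1 + J * (Jᵀ * J)⁻¹ * Jᵀ) (-J) (-Jᵀ) (Jᵀ * J)).PosDef := by
  have hK : (Jᵀ * J).PosDef := by
    simpa using Matrix.PosDef.conjTranspose_mul_self J (Matrix.mulVec_injective_of_isUnit_mul hJ)
  have := hJ.invertible
  have hS : (1 + J * (Jᵀ * J)⁻¹ * Jᵀ - -J * (Jᵀ * J)⁻¹ * (-J)ᴴ).PosDef := by
    simpa using Matrix.PosDef.one
  simpa using hK.fromBlocks₂₂_of_schurComplement (-J) hS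
end

section
/- (Lemma 1: sGS sweep equals joint semi-proximal minimization.) Let J : ℝᵖ → ℝ^{m×n} be an injective linear map with adjoint J* (with respect to the Frobenius inner product), let b, X, Y, Eᵏ ∈ ℝ^{m×n}, λ > 0, σ > 0. Define τ^{1/2} = −(J*J)⁻¹(J*(b − X − Eᵏ) + σ⁻¹J*Y), E⁺ = S_{λ/σ}(b + J τ^{1/2} − X + σ⁻¹Y), and τ⁺ = −(J*J)⁻¹(J*(b − X − E⁺) + σ⁻¹J*Y). Let 𝒫 = J(J*J)⁻¹J* : ℝ^{m×n} → ℝ^{m×n}. Then (E⁺, τ⁺) is the unique minimizer over (E, τ) ∈ ℝ^{m×n} × ℝᵖ of the function (E, τ) ↦ λ‖E‖₁ + ⟨Y, b + Jτ − X − E⟩ + (σ/2)‖b + Jτ − X − E‖_F² + (σ/2)⟨E − Eᵏ, 𝒫(E − Eᵏ)⟩. -/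
open scoped Matrix

noncomputable section

/-- Frobenius inner product on real matrices. -/
def finner {m n : ℕ} (A B : Matrix (Fin m) (Fin n) ℝ) : ℝ := ∑ i, ∑ j, A i j * B i j

/-- Frobenius norm. -/
noncomputable def frobNorm {m n : ℕ} (A : Matrix (Fin m) (Fin n) ℝ) : ℝ := Real.sqrt (finner A A)

/-- Entrywise ℓ1 norm of a matrix. -/
def l1Norm {m n : ℕ} (A : Matrix (Fin m) (Fin n) ℝ) : ℝ := ∑ i, ∑ j, |A i j|

/-- Nuclear norm: trace of the PSD square root of XᵀX. -/
noncomputable def nuclearNorm {m n : ℕ} (X : Matrix (Fin m) (Fin n) ℝ) : ℝ :=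
  ((Matrix.posSemidef_conjTranspose_mul_self X).1.eigenvectorUnitary.1 *
    Matrix.diagonal ((RCLike.ofReal : ℝ → ℝ) ∘ (Real.sqrt ·) ∘
      (Matrix.posSemidef_conjTranspose_mul_self X).1.eigenvalues) *
    (star (Matrix.posSemidef_conjTranspose_mul_self X).1.eigenvectorUnitary :
      Matrix (Fin n) (Fin n) ℝ)).trace

/-- Entrywise soft-thresholding operator. -/
noncomputable def softThresh {m n : ℕ} (μ : ℝ) (X : Matrix (Fin m) (Fin n) ℝ) :
    Matrix (Fin m) (Fin n) ℝ :=
  Matrix.of fun i j => Real.sign (X i j) * max (|X i j| - μ) 0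

/-- Spectral norm: the ℓ²→ℓ² operator norm. -/
noncomputable def spectralNorm' {m n : ℕ} (Y : Matrix (Fin m) (Fin n) ℝ) : ℝ :=
  ‖LinearMap.toContinuousLinearMap (Matrix.toEuclideanLin Y)‖

/-! The objective is a quadratic in `(E, Jτ)` plus `λ‖E‖₁`. Since `𝒫` is the orthogonal projection
onto the range of `J`, completing the square and splitting along `range J ⊕ (range J)ᗮ` separates it
as `λ‖E‖₁ + (σ/2)‖E - M‖² + (σ/2)‖Jτ + 𝒫(C - E)‖² + const` with `C = b - X + σ⁻¹Y` and
`M = C - 𝒫(C - Eᵏ) = b + Jτ^{1/2} - X + σ⁻¹Y`. The first two terms are minimized by `E⁺ = S_{λ/σ}(M)`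
with quadratic growth `(σ/2)‖E - E⁺‖²`, and the last one vanishes exactly when `Jτ = -𝒫(C - E)`,
i.e. at `τ⁺` once `E = E⁺`; injectivity of `J` gives uniqueness. -/

namespace SGSSweep

variable {m n : ℕ}

section Frobenius

lemma finner_comm (A B : Matrix (Fin m) (Fin n) ℝ) : finner A B = finner B A := by
  simp only [finner, mul_comm]

lemma finner_add_left (A B C : Matrix (Fin m) (Fin n) ℝ) :
    finner (A + B) C = finner A C + finner B C := by
  simp only [finner, Matrix.add_apply, add_mul, Finset.sum_add_distrib]

lemma finner_sub_left (A B C : Matrix (Fin m) (Fin n) ℝ) :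
    finner (A - B) C = finner A C - finner B C := by
  simp only [finner, Matrix.sub_apply, sub_mul, Finset.sum_sub_distrib]

lemma finner_smul_left (c : ℝ) (A B : Matrix (Fin m) (Fin n) ℝ) :
    finner (c • A) B = c * finner A B := by
  simp only [finner, Matrix.smul_apply, smul_eq_mul, mul_assoc, Finset.mul_sum]

lemma finner_add_right (A B C : Matrix (Fin m) (Fin n) ℝ) :
    finner A (B + C) = finner A B + finner A C := by
  rw [finner_comm, finner_add_left, finner_comm B, finner_comm C]

lemma finner_sub_right (A B C : Matrix (Fin m) (Fin n) ℝ) :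
    finner A (B - C) = finner A B - finner A C := by
  rw [finner_comm, finner_sub_left, finner_comm B, finner_comm C]

lemma finner_smul_right (c : ℝ) (A B : Matrix (Fin m) (Fin n) ℝ) :
    finner A (c • B) = c * finner A B := by
  rw [finner_comm, finner_smul_left, finner_comm]

lemma finner_self_nonneg (A : Matrix (Fin m) (Fin n) ℝ) : 0 ≤ finner A A :=
  Finset.sum_nonneg fun i _ => Finset.sum_nonneg fun j _ => mul_self_nonneg (A i j)

lemma finner_self_eq_zero_iff {A : Matrix (Fin m) (Fin n) ℝ} : finner A A = 0 ↔ A = 0 := by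
  refine ⟨fun h => ?_, fun h => by simp [h, finner]⟩
  ext i j
  have hrow := (Finset.sum_eq_zero_iff_of_nonneg fun i _ =>
    Finset.sum_nonneg fun j _ => mul_self_nonneg (A i j)).mp h i (Finset.mem_univ i)
  exact mul_self_eq_zero.mp <| (Finset.sum_eq_zero_iff_of_nonneg fun j _ =>
    mul_self_nonneg (A i j)).mp hrow j (Finset.mem_univ j)

lemma finner_self_add_finner_self_eq_zero {A B : Matrix (Fin m) (Fin n) ℝ}
    (h : finner A A + finner B B = 0) : A = 0 ∧ B = 0 := by
  obtain ⟨hA, hB⟩ := (add_eq_zero_iff_of_nonneg (finner_self_nonneg A) (finner_self_nonneg B)).mp h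
  exact ⟨finner_self_eq_zero_iff.mp hA, finner_self_eq_zero_iff.mp hB⟩

lemma frobNorm_sq (A : Matrix (Fin m) (Fin n) ℝ) : frobNorm A ^ 2 = finner A A :=
  Real.sq_sqrt (finner_self_nonneg A)

lemma finner_add_self (A B : Matrix (Fin m) (Fin n) ℝ) :
    finner (A + B) (A + B) = finner A A + 2 * finner A B + finner B B := by
  rw [finner_add_left, finner_add_right, finner_add_right, finner_comm B A]; ring

lemma finner_sub_self (A B : Matrix (Fin m) (Fin n) ℝ) :
    finner (A - B) (A - B) = finner A A - 2 * finner A B + finner B B := by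
  rw [finner_sub_left, finner_sub_right, finner_sub_right, finner_comm B A]; ring

lemma finner_add_sub_smul_complete_square {σ : ℝ} (hσ : σ ≠ 0) (Y Z : Matrix (Fin m) (Fin n) ℝ) :
    finner Y (Z - σ⁻¹ • Y) + σ / 2 * finner (Z - σ⁻¹ • Y) (Z - σ⁻¹ • Y) =
      σ / 2 * finner Z Z - (2 * σ)⁻¹ * finner Y Y := by
  simp only [finner_sub_left, finner_sub_right, finner_smul_left, finner_smul_right]
  rw [finner_comm Y Z]
  field_simp
  ring

end Frobenius

section Projection

variable {P : Matrix (Fin m) (Fin n) ℝ →ₗ[ℝ] Matrix (Fin m) (Fin n) ℝ}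
  (hsymm : ∀ A B, finner (P A) B = finner A (P B)) (hidem : ∀ A, P (P A) = P A)
include hsymm hidem

lemma finner_sub_proj_proj (A B : Matrix (Fin m) (Fin n) ℝ) : finner (A - P A) (P B) = 0 := by
  rw [finner_sub_left, hsymm, hidem, sub_self]

lemma finner_proj_self (A : Matrix (Fin m) (Fin n) ℝ) : finner A (P A) = finner (P A) (P A) := by
  rw [hsymm, hidem]

/-- With `C = b - X + σ⁻¹Y` and `u = Jτ`, the left side is the smooth part of the objective; the
right side separates it into an `E`-term and a `τ`-term. -/
lemma prox_objective_decomposition {σ : ℝ} (hσ : σ ≠ 0) (Y C E Ek u : Matrix (Fin m) (Fin n) ℝ)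
    (hu : P u = u) :
    finner Y (C - E + u - σ⁻¹ • Y) + σ / 2 * finner (C - E + u - σ⁻¹ • Y) (C - E + u - σ⁻¹ • Y) +
        σ / 2 * finner (E - Ek) (P (E - Ek)) =
      σ / 2 * finner (E - (C - P (C - Ek))) (E - (C - P (C - Ek))) +
        σ / 2 * finner (u + P (C - E)) (u + P (C - E)) - (2 * σ)⁻¹ * finner Y Y := by
  have hsplit : C - E + u = (C - E - P (C - E)) + (u + P (C - E)) := by abel
  have hE : E - (C - P (C - Ek)) = P (E - Ek) - (C - E - P (C - E)) := by
    rw [show C - Ek = (C - E) + (E - Ek) by abel, map_add]; abel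
  have horth_u : finner (C - E - P (C - E)) (u + P (C - E)) = 0 := by
    rw [show u + P (C - E) = P (C - E + u) by rw [map_add, hu, add_comm]]
    exact finner_sub_proj_proj hsymm hidem _ _
  have horth_d : finner (P (E - Ek)) (C - E - P (C - E)) = 0 := by
    rw [finner_comm]
    exact finner_sub_proj_proj hsymm hidem _ _
  rw [finner_add_sub_smul_complete_square hσ, hsplit, hE, finner_add_self (C - E - P (C - E)),
    finner_sub_self (P (E - Ek)), horth_u, horth_d, finner_proj_self hsymm hidem (E - Ek)]
  ring

end Projection

section GramProjection

variable {p : ℕ} {J : (Fin p → ℝ) →ₗ[ℝ] Matrix (Fin m) (Fin n) ℝ}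
  {Jadj : Matrix (Fin m) (Fin n) ℝ →ₗ[ℝ] (Fin p → ℝ)} {Kinv : (Fin p → ℝ) →ₗ[ℝ] (Fin p → ℝ)}

/-- The projection `𝒫 = J (J*J)⁻¹ J*` onto the range of `J`. -/
def gramProj (J : (Fin p → ℝ) →ₗ[ℝ] Matrix (Fin m) (Fin n) ℝ)
    (Kinv : (Fin p → ℝ) →ₗ[ℝ] (Fin p → ℝ)) (Jadj : Matrix (Fin m) (Fin n) ℝ →ₗ[ℝ] (Fin p → ℝ)) :
    Matrix (Fin m) (Fin n) ℝ →ₗ[ℝ] Matrix (Fin m) (Fin n) ℝ :=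
  J ∘ₗ Kinv ∘ₗ Jadj

lemma gramProj_apply (A : Matrix (Fin m) (Fin n) ℝ) :
    gramProj J Kinv Jadj A = J (Kinv (Jadj A)) := rfl

lemma gramProj_apply_self (hKinv : ∀ v, Kinv (Jadj (J v)) = v) (v : Fin p → ℝ) :
    gramProj J Kinv Jadj (J v) = J v := by
  rw [gramProj_apply, hKinv]

lemma gramProj_idem (hKinv' : ∀ v, Jadj (J (Kinv v)) = v) (A : Matrix (Fin m) (Fin n) ℝ) :
    gramProj J Kinv Jadj (gramProj J Kinv Jadj A) = gramProj J Kinv Jadj A := by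
  simp only [gramProj_apply, hKinv']

lemma sum_Kinv_mul_eq_finner (hadj : ∀ v A, finner (J v) A = ∑ i, v i * Jadj A i)
    (hKinv' : ∀ v, Jadj (J (Kinv v)) = v) (u w : Fin p → ℝ) :
    ∑ i, Kinv u i * w i = finner (J (Kinv u)) (J (Kinv w)) := by
  rw [hadj, hKinv']

lemma gramProj_symm (hadj : ∀ v A, finner (J v) A = ∑ i, v i * Jadj A i)
    (hKinv' : ∀ v, Jadj (J (Kinv v)) = v) (A B : Matrix (Fin m) (Fin n) ℝ) :
    finner (gramProj J Kinv Jadj A) B = finner A (gramProj J Kinv Jadj B) := by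
  simp only [gramProj_apply]
  rw [hadj, sum_Kinv_mul_eq_finner hadj hKinv', finner_comm,
    ← sum_Kinv_mul_eq_finner hadj hKinv', ← hadj, finner_comm]

end GramProjection

section SoftThreshold

def softThreshReal (μ x : ℝ) : ℝ := Real.sign x * max (|x| - μ) 0

lemma softThresh_apply (μ : ℝ) (X : Matrix (Fin m) (Fin n) ℝ) (i : Fin m) (j : Fin n) :
    softThresh μ X i j = softThreshReal μ (X i j) := rfl

/-- `x - S_μ x` is a subgradient of `μ|·|` at `S_μ x`. -/
lemma softThreshReal_optimality {μ : ℝ} (hμ : 0 ≤ μ) (x : ℝ) :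
    |x - softThreshReal μ x| ≤ μ ∧
      (x - softThreshReal μ x) * softThreshReal μ x = μ * |softThreshReal μ x| := by
  unfold softThreshReal
  rcases le_or_gt |x| μ with hsmall | hlarge
  · rw [max_eq_right (by linarith)]
    simpa using hsmall
  · rw [max_eq_left (by linarith)]
    rcases lt_or_gt_of_ne (show x ≠ 0 by rintro rfl; simp at hlarge; linarith) with hneg | hpos
    · rw [abs_of_neg hneg] at hlarge ⊢
      rw [Real.sign_of_neg hneg, abs_of_neg (by linarith : -1 * (-x - μ) < 0)]
      constructor
      · rw [show x - -1 * (-x - μ) = -μ by ring, abs_neg, abs_of_nonneg hμ]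
      · ring
    · rw [abs_of_pos hpos] at hlarge ⊢
      rw [Real.sign_of_pos hpos, abs_of_pos (by linarith : 0 < 1 * (x - μ))]
      constructor
      · rw [show x - 1 * (x - μ) = μ by ring, abs_of_nonneg hμ]
      · ring

lemma softThreshReal_prox_growth {μ : ℝ} (hμ : 0 ≤ μ) (x e : ℝ) :
    μ * |softThreshReal μ x| + (softThreshReal μ x - x) ^ 2 / 2 +
        (e - softThreshReal μ x) ^ 2 / 2 ≤ μ * |e| + (e - x) ^ 2 / 2 := by
  obtain ⟨hbound, hsubgrad⟩ := softThreshReal_optimality hμ x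
  have hpair : (x - softThreshReal μ x) * e ≤ μ * |e| :=
    (le_abs_self _).trans <| (abs_mul _ _).trans_le <|
      mul_le_mul_of_nonneg_right hbound (abs_nonneg e)
  linear_combination hpair - hsubgrad

lemma softThresh_prox_growth {μ : ℝ} (hμ : 0 ≤ μ) (M E : Matrix (Fin m) (Fin n) ℝ) :
    μ * l1Norm (softThresh μ M) + finner (softThresh μ M - M) (softThresh μ M - M) / 2 +
        finner (E - softThresh μ M) (E - softThresh μ M) / 2 ≤
      μ * l1Norm E + finner (E - M) (E - M) / 2 := by
  simp only [l1Norm, finner, Matrix.sub_apply, softThresh_apply, Finset.mul_sum, Finset.sum_div,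
    ← Finset.sum_add_distrib]
  refine Finset.sum_le_sum fun i _ => Finset.sum_le_sum fun j _ => ?_
  simpa only [sq] using softThreshReal_prox_growth hμ (M i j) (E i j)

end SoftThreshold

lemma isUniqueMin_of_add_growth_le {α : Type*} {F q : α → ℝ} {w₀ : α} (hq : ∀ w, 0 ≤ q w)
    (hq_eq_zero : ∀ w, q w = 0 → w = w₀) (hgrowth : ∀ w, F w₀ + q w ≤ F w) :
    (∀ w, F w₀ ≤ F w) ∧ ∀ w, (∀ w', F w ≤ F w') → w = w₀ :=
  ⟨fun w => by linarith [hq w, hgrowth w],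
    fun w hw => hq_eq_zero w (le_antisymm (by linarith [hw w₀, hgrowth w]) (hq w))⟩

end SGSSweep

open SGSSweep

/-- Lemma 1: one sGS sweep equals joint semi-proximal minimization.
With `Kinv = (J*J)⁻¹`, `τ^{1/2} = -(J*J)⁻¹(J*(b - X - Eᵏ) + σ⁻¹J*Y)`,
`E⁺ = S_{λ/σ}(b + Jτ^{1/2} - X + σ⁻¹Y)`, `τ⁺ = -(J*J)⁻¹(J*(b - X - E⁺) + σ⁻¹J*Y)` and
`𝒫 = J(J*J)⁻¹J*`, the pair `(E⁺, τ⁺)` is the unique minimizer of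
`(E, τ) ↦ λ‖E‖₁ + ⟨Y, b + Jτ - X - E⟩ + (σ/2)‖b + Jτ - X - E‖_F²
  + (σ/2)⟨E - Eᵏ, 𝒫(E - Eᵏ)⟩`. -/
theorem sGS_sweep_eq_joint_minimization {m n p : ℕ}
    (J : (Fin p → ℝ) →ₗ[ℝ] Matrix (Fin m) (Fin n) ℝ) (hJ : Function.Injective J)
    (Jadj : Matrix (Fin m) (Fin n) ℝ →ₗ[ℝ] (Fin p → ℝ))
    (hadj : ∀ (v : Fin p → ℝ) (A : Matrix (Fin m) (Fin n) ℝ),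
      finner (J v) A = ∑ i, v i * Jadj A i)
    (Kinv : (Fin p → ℝ) →ₗ[ℝ] (Fin p → ℝ))
    (hKinv : ∀ v : Fin p → ℝ, Kinv (Jadj (J v)) = v)
    (hKinv' : ∀ v : Fin p → ℝ, Jadj (J (Kinv v)) = v)
    (b X Y Ek : Matrix (Fin m) (Fin n) ℝ) (lam σ : ℝ) (hlam : 0 < lam) (hσ : 0 < σ)
    (τhalf : Fin p → ℝ)
    (hτhalf : τhalf = -(Kinv (Jadj (b - X - Ek) + σ⁻¹ • Jadj Y)))
    (Eplus : Matrix (Fin m) (Fin n) ℝ)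
    (hEplus : Eplus = softThresh (lam / σ) (b + J τhalf - X + σ⁻¹ • Y))
    (τplus : Fin p → ℝ)
    (hτplus : τplus = -(Kinv (Jadj (b - X - Eplus) + σ⁻¹ • Jadj Y)))
    (F : Matrix (Fin m) (Fin n) ℝ × (Fin p → ℝ) → ℝ)
    (hF : ∀ w : Matrix (Fin m) (Fin n) ℝ × (Fin p → ℝ),
      F w = lam * l1Norm w.1 + finner Y (b + J w.2 - X - w.1) +
        (σ / 2) * frobNorm (b + J w.2 - X - w.1) ^ 2 +
        (σ / 2) * finner (w.1 - Ek) (J (Kinv (Jadj (w.1 - Ek))))) :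
    (∀ w : Matrix (Fin m) (Fin n) ℝ × (Fin p → ℝ), F (Eplus, τplus) ≤ F w) ∧
    (∀ w : Matrix (Fin m) (Fin n) ℝ × (Fin p → ℝ),
      (∀ w' : Matrix (Fin m) (Fin n) ℝ × (Fin p → ℝ), F w ≤ F w') → w = (Eplus, τplus)) := by
  set P := gramProj J Kinv Jadj
  set C := b - X + σ⁻¹ • Y with hC
  have hres : ∀ E, J (Kinv (Jadj (b - X - E) + σ⁻¹ • Jadj Y)) = P (C - E) := fun E => by
    rw [gramProj_apply, show C - E = b - X - E + σ⁻¹ • Y by rw [hC]; abel, map_add Jadj,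
      map_smul Jadj]
  have hJτplus : J τplus + P (C - Eplus) = 0 := by rw [hτplus, map_neg, hres, neg_add_cancel]
  set M := C - P (C - Ek) with hM
  have hEplus_eq : Eplus = softThresh (lam / σ) M := by
    rw [hEplus, hτhalf, map_neg, hres, show b + -P (C - Ek) - X + σ⁻¹ • Y = M by rw [hM, hC]; abel]
  have hF' : ∀ E τ, F (E, τ) = lam * l1Norm E + σ / 2 * finner (E - M) (E - M) +
      σ / 2 * finner (J τ + P (C - E)) (J τ + P (C - E)) - (2 * σ)⁻¹ * finner Y Y := fun E τ => by
    have hsmooth := prox_objective_decomposition (gramProj_symm hadj hKinv')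
      (gramProj_idem hKinv') hσ.ne' Y C E Ek (J τ) (gramProj_apply_self hKinv τ)
    rw [hF, frobNorm_sq, show b + J τ - X - E = C - E + J τ - σ⁻¹ • Y by rw [hC]; abel]
    dsimp only
    rw [← gramProj_apply]
    linarith
  refine isUniqueMin_of_add_growth_le (q := fun w => σ / 2 * (finner (w.1 - Eplus) (w.1 - Eplus) +
      finner (J w.2 + P (C - w.1)) (J w.2 + P (C - w.1)))) ?_ ?_ ?_
  · exact fun w => mul_nonneg (by positivity) (add_nonneg (finner_self_nonneg _) (finner_self_nonneg _))
  · rintro ⟨E, τ⟩ hq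
    obtain ⟨hE, hτ⟩ :=
      finner_self_add_finner_self_eq_zero ((mul_eq_zero.mp hq).resolve_left (by positivity))
    obtain rfl : E = Eplus := sub_eq_zero.mp hE
    refine Prod.ext rfl (hJ ?_)
    rw [eq_neg_of_add_eq_zero_left hτ, eq_neg_of_add_eq_zero_left hJτplus]
  · rintro ⟨E, τ⟩
    have hprox := hEplus_eq ▸ softThresh_prox_growth (div_nonneg hlam.le hσ.le) M E
    have hlam_eq : σ * (lam / σ) = lam := mul_div_cancel₀ lam hσ.ne'
    simp only [hF', hJτplus, finner_self_eq_zero_iff.mpr rfl]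
    linear_combination σ * hprox + (l1Norm E - l1Norm Eplus) * hlam_eq
end
end
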